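/- Let C be a triangulated category carrying a bounded weight structure w and a bounded t-structure t satisfying condition (iv) of Theorem 1.1 (for every X ∈ Heart(t) and every i ∈ ℤ there exists a nice weight decomposition of X at level i). Let W_{≤i} : Heart(t) → Heart(t) denote the right adjoint to the inclusion of the full subcategory of Heart(t) on objects of C^{w≤i}, and set W_{≥i}X := X / W_{≤i−1}X. Then, for every i ∈ ℤ, the functors Gr_i : X ↦ W_{≥i}(W_{≤i}X) and Gr_i' : X ↦ W_{≤i}(W_{≥i}X) are isomorphic exact endofunctors of Heart(t); they take their values in the full subcategory A_i := Heart(t) ∩ C^{w=i} and restrict to the identity on A_i; moreover Gr_i(X) ≅ W_{≤i}X / W_{≤i−1}X naturally in X. -/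

import Mathlib

open CategoryTheory CategoryTheory.Limits CategoryTheory.Pretriangulated

universe v u

namespace WT

variable (C : Type u) [Category.{v} C] [Preadditive C] [HasZeroObject C]
  [HasShift C ℤ] [∀ n : ℤ, (shiftFunctor C n).Additive] [Pretriangulated C]

/-- `D ⊥ E`: every morphism from an object of `D` to an object of `E` vanishes. -/
def Perp (D E : Set C) : Prop :=
  ∀ ⦃X : C⦄, X ∈ D → ∀ ⦃Y : C⦄, Y ∈ E → ∀ f : X ⟶ Y, f = 0

/-- The shift `D[n]` of a class of objects: objects isomorphic to `Y⟦n⟧` for `Y ∈ D`. -/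
def shiftClass (D : Set C) (n : ℤ) : Set C :=
  {X : C | ∃ Y ∈ D, Nonempty (X ≅ (Y⟦n⟧ : C))}

/-- A class of objects is extension-stable if for any distinguished triangle
`A → B → C' → A⟦1⟧` with `A, C' ∈ D` one has `B ∈ D`. -/
def ExtensionStable (D : Set C) : Prop :=
  ∀ (T : Triangle C), T ∈ (distTriang C) → T.obj₁ ∈ D → T.obj₃ ∈ D → T.obj₂ ∈ D

/-- The envelope of a class of objects: the smallest extension-stable class containing it. -/
def envelope (F : Set C) : Set C :=
  ⋂₀ {D : Set C | ExtensionStable C D ∧ F ⊆ D}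

/-- A class of objects corresponding to a strictly full triangulated subcategory. -/
structure IsTriangulatedClass (S : Set C) : Prop where
  isoClosed : ∀ ⦃X Y : C⦄, (X ≅ Y) → X ∈ S → Y ∈ S
  shift : ∀ (n : ℤ) (X : C), X ∈ S → (X⟦n⟧ : C) ∈ S
  ext : ExtensionStable C S

/-- The smallest strictly full triangulated subcategory (as a class of objects)
containing a given class of objects. -/
def triangulatedHull (F : Set C) : Set C :=
  ⋂₀ {S : Set C | IsTriangulatedClass C S ∧ F ⊆ S}

/-- A family `(A i)` of classes of objects is semi-orthogonal if
`Hom(X, Y⟦s⟧) = 0` for `X ∈ A i`, `Y ∈ A j` whenever `s < 0` or `s > i - j`. -/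
def SemiOrthogonal (A : ℤ → Set C) : Prop :=
  ∀ i j s : ℤ, (s < 0 ∨ i - j < s) →
    ∀ ⦃X : C⦄, X ∈ A i → ∀ ⦃Y : C⦄, Y ∈ A j → ∀ f : X ⟶ (Y⟦s⟧ : C), f = 0

/-- Strong semi-orthogonality: semi-orthogonality together with `A i ⊥ A j` for `i ≠ j`. -/
def StronglySemiOrthogonal (A : ℤ → Set C) : Prop :=
  SemiOrthogonal C A ∧ ∀ i j : ℤ, i ≠ j → Perp C (A i) (A j)

/-- The family `(A i)` is generating: the smallest strictly full triangulated subcategory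
containing all the `A i` is the whole category. -/
def IsGenerating (A : ℤ → Set C) : Prop :=
  ∀ X : C, X ∈ triangulatedHull C (⋃ i : ℤ, A i)

end WT

namespace WT

/-- A category is abelian semi-simple if it carries an abelian structure for which every
object is a finite direct sum of simple objects. -/
def IsSemisimpleAbelian (B : Type*) [Category B] : Prop :=
  ∃ inst : Abelian B,
    haveI := inst
    haveI : HasFiniteBiproducts B := Abelian.hasFiniteBiproducts
    ∀ X : B, ∃ (n : ℕ) (f : Fin n → B),
      (∀ l, Simple (f l)) ∧ Nonempty (X ≅ ⨁ f)

variable (C : Type u) [Category.{v} C] [Preadditive C] [HasZeroObject C]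
  [HasShift C ℤ] [∀ n : ℤ, (shiftFunctor C n).Additive] [Pretriangulated C]

/-- A bounded t-structure, given by the classes `C^{t≤0}` and `C^{t≥0}`. -/
structure BoundedTStructure where
  le : Set C
  ge : Set C
  le_shift : ∀ X ∈ le, (X⟦(1 : ℤ)⟧ : C) ∈ le
  ge_shift : ∀ X ∈ ge, (X⟦(-1 : ℤ)⟧ : C) ∈ ge
  orth : ∀ X ∈ le, ∀ Y ∈ ge, ∀ f : X ⟶ (Y⟦(-1 : ℤ)⟧ : C), f = 0
  decomp : ∀ X : C, ∃ (A B : C) (f : A ⟶ X) (g : X ⟶ B) (h : B ⟶ (A⟦(1 : ℤ)⟧ : C)),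
    Triangle.mk f g h ∈ (distTriang C) ∧ A ∈ le ∧ B ∈ shiftClass C ge (-1)
  bounded_le : ∀ X : C, ∃ i : ℤ, X ∈ shiftClass C le (-i)
  bounded_ge : ∀ X : C, ∃ j : ℤ, X ∈ shiftClass C ge (-j)

variable {C}

/-- `C^{t≤i} := C^{t≤0}[-i]`. -/
def BoundedTStructure.tle (t : BoundedTStructure C) (i : ℤ) : Set C :=
  shiftClass C t.le (-i)

/-- `C^{t≥i} := C^{t≥0}[-i]`. -/
def BoundedTStructure.tge (t : BoundedTStructure C) (i : ℤ) : Set C :=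
  shiftClass C t.ge (-i)

/-- The heart of a t-structure. -/
def BoundedTStructure.heart (t : BoundedTStructure C) : Set C :=
  t.le ∩ t.ge

variable (C)

/-- A bounded weight structure (sign convention of the paper), given by the classes
`C^{w≤0}` and `C^{w≥0}`. -/
structure BoundedWeightStructure [HasBinaryBiproducts C] where
  le : Set C
  ge : Set C
  le_sum : ∀ X ∈ le, ∀ Y ∈ le, (X ⊞ Y : C) ∈ le
  ge_sum : ∀ X ∈ ge, ∀ Y ∈ ge, (X ⊞ Y : C) ∈ ge
  le_retract : ∀ ⦃X Y : C⦄, (∃ (s : X ⟶ Y) (r : Y ⟶ X), s ≫ r = 𝟙 X) → Y ∈ le → X ∈ le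
  ge_retract : ∀ ⦃X Y : C⦄, (∃ (s : X ⟶ Y) (r : Y ⟶ X), s ≫ r = 𝟙 X) → Y ∈ ge → X ∈ ge
  le_shift : ∀ X ∈ le, (X⟦(-1 : ℤ)⟧ : C) ∈ le
  ge_shift : ∀ X ∈ ge, (X⟦(1 : ℤ)⟧ : C) ∈ ge
  orth : ∀ X ∈ le, ∀ Y ∈ ge, ∀ f : X ⟶ (Y⟦(1 : ℤ)⟧ : C), f = 0
  decomp : ∀ X : C, ∃ (A B : C) (f : A ⟶ X) (g : X ⟶ B) (h : B ⟶ (A⟦(1 : ℤ)⟧ : C)),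
    Triangle.mk f g h ∈ (distTriang C) ∧ A ∈ le ∧ B ∈ shiftClass C ge 1
  bounded_le : ∀ X : C, ∃ i : ℤ, X ∈ shiftClass C le i
  bounded_ge : ∀ X : C, ∃ j : ℤ, X ∈ shiftClass C ge j

variable {C} [HasBinaryBiproducts C]

/-- `C^{w≤i} := C^{w≤0}[i]`. -/
def BoundedWeightStructure.wle (w : BoundedWeightStructure C) (i : ℤ) : Set C :=
  shiftClass C w.le i

/-- `C^{w≥i} := C^{w≥0}[i]`. -/
def BoundedWeightStructure.wge (w : BoundedWeightStructure C) (i : ℤ) : Set C :=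
  shiftClass C w.ge i

/-- A nice weight decomposition of `X` at level `i`: a weight decomposition
`w_{≤i}X → X → w_{≥i+1}X` all three of whose terms lie in the heart of `t`. -/
def NiceDecomposition (w : BoundedWeightStructure C) (t : BoundedTStructure C)
    (i : ℤ) (X : C) : Prop :=
  ∃ (A B : C) (f : A ⟶ X) (g : X ⟶ B) (h : B ⟶ (A⟦(1 : ℤ)⟧ : C)),
    Triangle.mk f g h ∈ (distTriang C) ∧ A ∈ w.wle i ∧ B ∈ w.wge (i + 1) ∧
      A ∈ t.heart ∧ X ∈ t.heart ∧ B ∈ t.heart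

/-- Condition (iv) of Theorem 1.1: every object of the heart of `t` admits a nice
weight decomposition at every level. -/
def ConditionIV (w : BoundedWeightStructure C) (t : BoundedTStructure C) : Prop :=
  ∀ X ∈ t.heart, ∀ i : ℤ, NiceDecomposition w t i X

/-- The heart of `t` as a full subcategory. -/
abbrev Heart (t : BoundedTStructure C) := ObjectProperty.FullSubcategory (fun X : C => X ∈ t.heart)

/-- A morphism in the heart, viewed as a morphism of the ambient category. -/
def homC {P : C → Prop} {X Y : ObjectProperty.FullSubcategory P} (f : X ⟶ Y) : X.obj ⟶ Y.obj := f.hom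

/-- `0 → X → Y → Z → 0` is a short exact sequence in the heart of `t`; equivalently,
all three objects lie in the heart and the pair of morphisms extends to a
distinguished triangle. -/
def HeartSES (t : BoundedTStructure C) {X Y Z : C} (f : X ⟶ Y) (g : Y ⟶ Z) : Prop :=
  X ∈ t.heart ∧ Y ∈ t.heart ∧ Z ∈ t.heart ∧
    ∃ h : Z ⟶ (X⟦(1 : ℤ)⟧ : C), Triangle.mk f g h ∈ (distTriang C)

/-- A functor from the heart to itself is exact if it preserves short exact sequences. -/
def HeartExact (t : BoundedTStructure C) (F : Heart t ⥤ Heart t) : Prop :=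
  ∀ (X Y Z : Heart t) (f : X ⟶ Y) (g : Y ⟶ Z),
    HeartSES t (homC f) (homC g) → HeartSES t (homC (F.map f)) (homC (F.map g))

end WT

/-!
In the heart, a distinguished triangle `A → B → E → A[1]` behaves like a short exact sequence:
since `Hom(A[1], Z) = 0` for `Z ∈ C^{t≥0}` and `Hom(Z, E[-1]) = 0` for `Z ∈ C^{t≤0}`, the map
`B → E` is an epimorphism towards `C^{t≥0}` and `A → B` a monomorphism from `C^{t≤0}`. Together
with `Hom(C^{w≤a}, C^{w≥b}) = 0` for `a < b` this controls every map below; the octahedral axiom is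
never needed. Condition (iv) enters through retracts: `W_{≥i}X` is a retract of the last term of a
nice weight decomposition of `X` at level `i - 1`, hence lies in `C^{w≥i}`; likewise `W_{≤i}X` is a
retract of the first term of one at level `i`, hence lies in `C^{w≥i}` whenever `X` does.

Since `W_{≤i-1}W_{≤i}X = W_{≤i-1}X`, the object `Gr_i X` is the cokernel of `W_{≤i-1}X → W_{≤i}X`.
The comparison `Gr_i X → Gr_i' X` is induced by `W_{≤i}(X → W_{≥i}X)`; it is an isomorphism because
it is both a monomorphism and an epimorphism in the above sense, which forces its cone to vanish.
Exactness of `W_{≤i}`, and of `W_{≥i}` on objects of weight `≤ i`, is proved by identifying the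
expected third term with the cone of the first map through an explicit section.
-/

namespace WT

variable {C : Type u} [Category.{v} C]

section HomZero

variable [Preadditive C]

def HomZero (X Y : C) : Prop := ∀ f : X ⟶ Y, f = 0

lemma HomZero.of_iso {X X' Y Y' : C} (h : HomZero X' Y') (eX : X ≅ X') (eY : Y ≅ Y') :
    HomZero X Y := fun f => by
  simpa using congrArg (fun g => eX.hom ≫ g ≫ eY.inv) (h (eX.inv ≫ f ≫ eY.hom))

lemma HomZero.shift [HasShift C ℤ] [∀ n : ℤ, (shiftFunctor C n).Additive] {X Y : C}
    (h : HomZero X Y) (n : ℤ) : HomZero (X⟦n⟧) (Y⟦n⟧) := fun f => by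
  obtain ⟨g, rfl⟩ := (shiftFunctor C n).map_surjective f
  rw [h g, Functor.map_zero]

end HomZero

section ShiftClass

variable [HasShift C ℤ] {D : Set C}

lemma shift_mem_shiftClass {n : ℤ} {X : C} (hX : X ∈ shiftClass C D n) (m k : ℤ)
    (h : n + m = k) : X⟦m⟧ ∈ shiftClass C D k := by
  obtain ⟨P, hP, ⟨e⟩⟩ := hX
  exact ⟨P, hP, ⟨(shiftFunctor C m).mapIso e ≪≫ ((shiftFunctorAdd' C n m k h).app P).symm⟩⟩

lemma shiftClass_mono (hD : ∀ X ∈ D, X⟦(-1 : ℤ)⟧ ∈ D) {a b : ℤ} (hab : a ≤ b) :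
    shiftClass C D a ⊆ shiftClass C D b := by
  induction b, hab using Int.leInduction with
  | base => exact le_rfl
  | succ b _ ih =>
    rintro X hX
    obtain ⟨P, hP, ⟨e⟩⟩ := ih hX
    exact ⟨_, hD P hP, ⟨e ≪≫ (shiftFunctorAdd' C (-1) (b + 1) b (by ring)).app P⟩⟩

lemma shiftClass_anti (hD : ∀ X ∈ D, X⟦(1 : ℤ)⟧ ∈ D) {a b : ℤ} (hab : a ≤ b) :
    shiftClass C D b ⊆ shiftClass C D a := by
  induction b, hab using Int.leInduction with
  | base => exact le_rfl
  | succ b _ ih =>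
    rintro X ⟨P, hP, ⟨e⟩⟩
    exact ih ⟨_, hD P hP, ⟨e ≪≫ (shiftFunctorAdd' C 1 b (b + 1) (by ring)).app P⟩⟩

lemma mem_shiftClass_of_retract
    (hD : ∀ ⦃X Y : C⦄, (∃ (s : X ⟶ Y) (r : Y ⟶ X), s ≫ r = 𝟙 X) → Y ∈ D → X ∈ D)
    {n : ℤ} {X Y : C} (s : X ⟶ Y) (r : Y ⟶ X) (hsr : s ≫ r = 𝟙 X)
    (hY : Y ∈ shiftClass C D n) : X ∈ shiftClass C D n := by
  obtain ⟨P, hP, ⟨e⟩⟩ := hY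
  let c := (shiftFunctorCompIsoId C n (-n) (add_neg_cancel n)).app P
  have hX : X⟦-n⟧ ∈ D := hD ⟨(s ≫ e.hom)⟦-n⟧' ≫ c.hom, c.inv ≫ (e.inv ≫ r)⟦-n⟧', by
    simp [← Functor.map_comp, hsr]⟩ hP
  exact ⟨_, hX, ⟨((shiftFunctorCompIsoId C (-n) n (neg_add_cancel n)).app X).symm⟩⟩

end ShiftClass

variable [Preadditive C] [HasZeroObject C] [HasShift C ℤ] [∀ n : ℤ, (shiftFunctor C n).Additive]
  [Pretriangulated C]

section Triangles

lemma distinguished_mk_of_iso {X Y Z X' Y' Z' : C} {f : X ⟶ Y} {g : Y ⟶ Z}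
    {h : Z ⟶ X⟦(1 : ℤ)⟧} (hT : Triangle.mk f g h ∈ distTriang C) {f' : X' ⟶ Y'} {g' : Y' ⟶ Z'}
    {h' : Z' ⟶ X'⟦(1 : ℤ)⟧} (e₁ : X' ≅ X) (e₂ : Y' ≅ Y) (e₃ : Z' ≅ Z)
    (c₁ : f' ≫ e₂.hom = e₁.hom ≫ f) (c₂ : g' ≫ e₃.hom = e₂.hom ≫ g)
    (c₃ : h' ≫ e₁.hom⟦(1 : ℤ)⟧' = e₃.hom ≫ h) : Triangle.mk f' g' h' ∈ distTriang C :=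
  isomorphic_distinguished _ hT _ (Triangle.isoMk _ _ e₁ e₂ e₃ c₁ c₂ c₃)

section Mk

/- Restatements for `Triangle.mk f g h`: its objects are not reducibly those of `f`, `g`, `h`,
which otherwise leaks into the types of the witnesses. -/

variable {X Y Z W : C} {f : X ⟶ Y} {g : Y ⟶ Z} {h : Z ⟶ X⟦(1 : ℤ)⟧}

lemma mk_yoneda_exact₂ (hT : Triangle.mk f g h ∈ distTriang C) (u : Y ⟶ W) (hu : f ≫ u = 0) :
    ∃ v : Z ⟶ W, u = g ≫ v :=
  Triangle.yoneda_exact₂ _ hT u hu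

lemma mk_yoneda_exact₃ (hT : Triangle.mk f g h ∈ distTriang C) (u : Z ⟶ W) (hu : g ≫ u = 0) :
    ∃ v : X⟦(1 : ℤ)⟧ ⟶ W, u = h ≫ v :=
  Triangle.yoneda_exact₃ _ hT u hu

lemma mk_coyoneda_exact₁ (hT : Triangle.mk f g h ∈ distTriang C) (u : W ⟶ X⟦(1 : ℤ)⟧)
    (hu : u ≫ f⟦(1 : ℤ)⟧' = 0) : ∃ v : W ⟶ Z, u = v ≫ h :=
  Triangle.coyoneda_exact₁ _ hT u hu

lemma mk_coyoneda_exact₂ (hT : Triangle.mk f g h ∈ distTriang C) (u : W ⟶ Y) (hu : u ≫ g = 0) :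
    ∃ v : W ⟶ X, u = v ≫ f :=
  Triangle.coyoneda_exact₂ _ hT u hu

lemma mk_coyoneda_exact₃ (hT : Triangle.mk f g h ∈ distTriang C) (u : W ⟶ Z) (hu : u ≫ h = 0) :
    ∃ v : W ⟶ Y, u = v ≫ g :=
  Triangle.coyoneda_exact₃ _ hT u hu

lemma eq_of_mor₂_comp_eq (hT : Triangle.mk f g h ∈ distTriang C) (hW : HomZero (X⟦(1 : ℤ)⟧) W)
    {u u' : Z ⟶ W} (huu' : g ≫ u = g ≫ u') : u = u' := by
  obtain ⟨e, he⟩ := mk_yoneda_exact₃ hT (u - u') (by rw [Preadditive.comp_sub, huu', sub_self])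
  rw [← sub_eq_zero, he, hW e, comp_zero]

lemma eq_of_comp_mor₁_eq (hT : Triangle.mk f g h ∈ distTriang C) (hW : HomZero W (Z⟦(-1 : ℤ)⟧))
    {u u' : W ⟶ X} (huu' : u ≫ f = u' ≫ f) : u = u' := by
  obtain ⟨e, he⟩ := Triangle.coyoneda_exact₂ _ (inv_rot_of_distTriang _ hT) (u - u')
    (by show (u - u') ≫ f = 0; rw [Preadditive.sub_comp, huu', sub_self])
  have he0 : e = 0 := hW e
  rw [← sub_eq_zero, he, he0]
  exact zero_comp

lemma eq_zero_of_comp_shift_mor₁ (hT : Triangle.mk f g h ∈ distTriang C) (hW : HomZero W Z)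
    {u : W ⟶ X⟦(1 : ℤ)⟧} (hu : u ≫ f⟦(1 : ℤ)⟧' = 0) : u = 0 := by
  obtain ⟨e, rfl⟩ := mk_coyoneda_exact₁ hT u hu
  rw [hW e, zero_comp]

lemma homZero_obj₃ (hT : Triangle.mk f g h ∈ distTriang C) (h₂ : HomZero W Y)
    (h₁ : HomZero W (X⟦(1 : ℤ)⟧)) : HomZero W Z := fun u => by
  obtain ⟨e, rfl⟩ := mk_coyoneda_exact₃ hT u (h₁ _)
  rw [h₂ e, zero_comp]

lemma distinguished_mk_rotate (hT : Triangle.mk f g h ∈ distTriang C) :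
    Triangle.mk g h (-f⟦(1 : ℤ)⟧') ∈ distTriang C :=
  rot_of_distTriang _ hT

lemma distinguished_mk_of_iso₁ {X' : C} (hT : Triangle.mk f g h ∈ distTriang C) (e : X' ≅ X) :
    Triangle.mk (e.hom ≫ f) g (h ≫ e.inv⟦(1 : ℤ)⟧') ∈ distTriang C :=
  distinguished_mk_of_iso hT e (Iso.refl _) (Iso.refl _) (by simp) (by simp)
    (by simp [← Functor.map_comp])

lemma distinguished_mk_of_iso₃ {Z' : C} (hT : Triangle.mk f g h ∈ distTriang C) (e : Z ≅ Z') :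
    Triangle.mk f (g ≫ e.hom) (e.inv ≫ h) ∈ distTriang C :=
  distinguished_mk_of_iso hT (Iso.refl _) (Iso.refl _) e.symm (by simp) (by simp) (by simp)

end Mk

lemma comm₃_of_comm₁₂ {X Y Z X' Y' Z' : C} {f : X ⟶ Y} {g : Y ⟶ Z}
    {h : Z ⟶ X⟦(1 : ℤ)⟧} {f' : X' ⟶ Y'} {g' : Y' ⟶ Z'} {h' : Z' ⟶ X'⟦(1 : ℤ)⟧}
    (hT : Triangle.mk f g h ∈ distTriang C) (hT' : Triangle.mk f' g' h' ∈ distTriang C)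
    (hZ : HomZero (X⟦(1 : ℤ)⟧) Z') {a : X ⟶ X'} {b : Y ⟶ Y'} {c : Z ⟶ Z'}
    (h₁ : f ≫ b = a ≫ f') (h₂ : g ≫ c = b ≫ g') : h ≫ a⟦(1 : ℤ)⟧' = c ≫ h' := by
  obtain ⟨c', hc'₂, hc'₃⟩ := complete_distinguished_triangle_morphism _ _ hT hT' a b h₁
  rwa [eq_of_mor₂_comp_eq hT hZ (hc'₂.trans h₂.symm)] at hc'₃

lemma exists_eq_mor₁_comp_of_comp_eq_zero {X X' Y' Z W : C} {f' : X' ⟶ Y'} {g' : Y' ⟶ Z}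
    (h : Z ⟶ X⟦(1 : ℤ)⟧) (c : X ⟶ X') (hT : Triangle.mk f' g' (h ≫ c⟦(1 : ℤ)⟧') ∈ distTriang C)
    (u : X' ⟶ W) (hu : c ≫ u = 0) : ∃ v : Y' ⟶ W, u = f' ≫ v := by
  -- the first map of the inverse rotation factors through `c`
  refine Triangle.yoneda_exact₂ _ (inv_rot_of_distTriang _ hT) u ?_
  have hc := (shiftFunctorCompIsoId C (1 : ℤ) (-1) (add_neg_cancel 1)).hom.naturality c
  dsimp at hc
  show (-((h ≫ c⟦(1 : ℤ)⟧')⟦(-1 : ℤ)⟧') ≫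
    (shiftFunctorCompIsoId C (1 : ℤ) (-1) (add_neg_cancel 1)).hom.app X') ≫ u = 0
  simp [reassoc_of% hc, hu]

lemma distinguished_mk_of_section {A B K Z : C} {u : A ⟶ B} {k : B ⟶ K} {d : K ⟶ A⟦(1 : ℤ)⟧}
    (hT : Triangle.mk u k d ∈ distTriang C) (hAK : HomZero (A⟦(1 : ℤ)⟧) K) {v : B ⟶ Z}
    {p : K ⟶ Z} {s : Z ⟶ K} (hp : k ≫ p = v) (hs : v ≫ s = k) (hsp : s ≫ p = 𝟙 Z) :
    Triangle.mk u v (s ≫ d) ∈ distTriang C := by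
  have hps : p ≫ s = 𝟙 K :=
    eq_of_mor₂_comp_eq hT hAK
      (show k ≫ p ≫ s = k ≫ 𝟙 K by rw [reassoc_of% hp, hs, Category.comp_id])
  simpa [hp] using distinguished_mk_of_iso₃ hT ⟨p, s, hps, hsp⟩

end Triangles

section WeightStructure

variable [HasBinaryBiproducts C] {w : BoundedWeightStructure C}

lemma BoundedWeightStructure.wle_mono {a b : ℤ} (hab : a ≤ b) : w.wle a ⊆ w.wle b :=
  shiftClass_mono w.le_shift hab

lemma BoundedWeightStructure.wge_anti {a b : ℤ} (hab : a ≤ b) : w.wge b ⊆ w.wge a :=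
  shiftClass_anti w.ge_shift hab

lemma BoundedWeightStructure.mem_wle_of_retract {k : ℤ} {X Y : C} (s : X ⟶ Y) (r : Y ⟶ X)
    (hsr : s ≫ r = 𝟙 X) (hY : Y ∈ w.wle k) : X ∈ w.wle k :=
  mem_shiftClass_of_retract w.le_retract s r hsr hY

lemma BoundedWeightStructure.mem_wge_of_retract {k : ℤ} {X Y : C} (s : X ⟶ Y) (r : Y ⟶ X)
    (hsr : s ≫ r = 𝟙 X) (hY : Y ∈ w.wge k) : X ∈ w.wge k :=
  mem_shiftClass_of_retract w.ge_retract s r hsr hY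

lemma BoundedWeightStructure.homZero {a b : ℤ} (hab : a < b) {X Y : C} (hX : X ∈ w.wle a)
    (hY : Y ∈ w.wge b) : HomZero X Y := by
  obtain ⟨P, hP, ⟨eX⟩⟩ := hX
  obtain ⟨Q, hQ, ⟨eY⟩⟩ := w.wge_anti (show a + 1 ≤ b by omega) hY
  exact HomZero.of_iso (HomZero.shift (fun f => w.orth P hP Q hQ f) a) eX
    (eY ≪≫ (shiftFunctorAdd' C 1 a (a + 1) (by ring)).app Q)

lemma BoundedWeightStructure.exists_weightDecomposition (w : BoundedWeightStructure C) (X : C)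
    (k : ℤ) : ∃ (A B : C) (f : A ⟶ X) (g : X ⟶ B) (h : B ⟶ A⟦(1 : ℤ)⟧),
      Triangle.mk f g h ∈ distTriang C ∧ A ∈ w.wle k ∧ B ∈ w.wge (k + 1) := by
  obtain ⟨A, B, f, g, h, hT, hA, hB⟩ := w.decomp (X⟦-k⟧)
  let T := (Triangle.shiftFunctor C k).obj (Triangle.mk f g h)
  have hT' : Triangle.mk T.mor₁ T.mor₂ T.mor₃ ∈ distTriang C := Triangle.shift_distinguished _ hT k
  let e : X ≅ T.obj₂ := ((shiftFunctorCompIsoId C (-k) k (neg_add_cancel k)).app X).symm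
  exact ⟨_, _, T.mor₁ ≫ e.inv, e.hom ≫ T.mor₂, T.mor₃,
    distinguished_mk_of_iso hT' (Iso.refl _) e (Iso.refl _) (by simp) (by simp) (by simp),
    ⟨A, hA, ⟨Iso.refl _⟩⟩, shift_mem_shiftClass hB k (k + 1) (add_comm 1 k)⟩

lemma BoundedWeightStructure.mem_wle_of_distinguished {k : ℤ} {T : Triangle C}
    (hT : T ∈ distTriang C) (h₁ : T.obj₁ ∈ w.wle k) (h₃ : T.obj₃ ∈ w.wle k) :
    T.obj₂ ∈ w.wle k := by
  obtain ⟨A, B, a, b, h, hD, hA, hB⟩ := w.exists_weightDecomposition T.obj₂ k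
  obtain ⟨e, he⟩ := Triangle.yoneda_exact₂ T hT b (w.homZero (lt_add_one k) h₁ hB _)
  obtain ⟨r, hr⟩ := mk_coyoneda_exact₂ hD (𝟙 T.obj₂)
    (by rw [Category.id_comp, he, w.homZero (lt_add_one k) h₃ hB e, comp_zero])
  exact w.mem_wle_of_retract r a hr.symm hA

lemma BoundedWeightStructure.mem_wge_of_distinguished {k : ℤ} {T : Triangle C}
    (hT : T ∈ distTriang C) (h₁ : T.obj₁ ∈ w.wge k) (h₃ : T.obj₃ ∈ w.wge k) :
    T.obj₂ ∈ w.wge k := by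
  obtain ⟨A, B, a, b, h, hD, hA, hB⟩ := w.exists_weightDecomposition T.obj₂ (k - 1)
  obtain ⟨e, he⟩ := Triangle.coyoneda_exact₂ T hT a (w.homZero (sub_one_lt k) hA h₃ _)
  obtain ⟨r, hr⟩ := mk_yoneda_exact₂ hD (𝟙 T.obj₂)
    (by rw [Category.comp_id, he, w.homZero (sub_one_lt k) hA h₁ e, zero_comp])
  exact w.mem_wge_of_retract b r hr.symm (by simpa using hB)

end WeightStructure

section TStructure

variable {t : BoundedTStructure C}

lemma BoundedTStructure.homZero_shift_one {X Y : C} (hX : X ∈ t.le) (hY : Y ∈ t.ge) :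
    HomZero (X⟦(1 : ℤ)⟧) Y :=
  HomZero.of_iso (HomZero.shift (fun f => t.orth X hX Y hY f) 1) (Iso.refl _)
    ((shiftFunctorCompIsoId C (-1) 1 (neg_add_cancel 1)).app Y).symm

lemma BoundedTStructure.mono_of_distinguished {X Y : Heart t} (f : X ⟶ Y) {Z : C}
    {g : Y.obj ⟶ Z} {h : Z ⟶ X.obj⟦(1 : ℤ)⟧} (hT : Triangle.mk f.hom g h ∈ distTriang C)
    (hZ : Z ∈ t.ge) : Mono f :=
  ⟨fun {W} _ _ huu' => ObjectProperty.hom_ext _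
    (eq_of_comp_mor₁_eq hT (fun φ => t.orth _ W.property.1 _ hZ φ) (congrArg (·.hom) huu'))⟩

lemma BoundedTStructure.homZero_shift_cone {A B : Heart t} (f : A ⟶ B) [Mono f] {K : C}
    {k : B.obj ⟶ K} {d : K ⟶ A.obj⟦(1 : ℤ)⟧} (hT : Triangle.mk f.hom k d ∈ distTriang C) :
    HomZero (A.obj⟦(1 : ℤ)⟧) K := fun e => by
  obtain ⟨χ, hχ⟩ := (shiftFunctor C (1 : ℤ)).map_surjective (e ≫ d)
  have hd : d ≫ f.hom⟦(1 : ℤ)⟧' = 0 := comp_distTriang_mor_zero₃₁ _ hT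
  have hχf : χ ≫ f.hom = 0 := (shiftFunctor C (1 : ℤ)).map_injective (by
    rw [Functor.map_comp, hχ, Category.assoc, hd, comp_zero, Functor.map_zero])
  have hχ0 : ObjectProperty.homMk χ = 0 :=
    (cancel_mono f).1 (ObjectProperty.hom_ext _ (by simpa using hχf))
  obtain ⟨e', rfl⟩ := mk_coyoneda_exact₃ hT e
    (by rw [← hχ, show χ = 0 from congrArg (·.hom) hχ0, Functor.map_zero])
  rw [t.homZero_shift_one A.property.1 B.property.2 e', zero_comp]

lemma BoundedTStructure.isIso_of_mono_of_epi {G G' : C} (hG : G ∈ t.le) (hG' : G' ∈ t.ge)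
    (α : G ⟶ G')
    (hmono : ∀ Z : C, (∀ Y ∈ t.ge, HomZero Z (Y⟦(-1 : ℤ)⟧)) → ∀ z : Z ⟶ G, z ≫ α = 0 → z = 0)
    (hepi : ∀ Y ∈ t.ge, ∀ u : G' ⟶ Y, α ≫ u = 0 → u = 0) : IsIso α := by
  obtain ⟨K, π, δ, hT⟩ := distinguished_cocone_triangle α
  have hαπ : α ≫ π = 0 := comp_distTriang_mor_zero₁₂ _ hT
  have hK : ∀ Y ∈ t.ge, HomZero K Y := fun Y hY u => by
    obtain ⟨e, rfl⟩ := mk_yoneda_exact₃ hT u (hepi Y hY _ (by rw [reassoc_of% hαπ, zero_comp]))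
    rw [t.homZero_shift_one hG hY e, comp_zero]
  have hmono' : Mono α := by
    refine Triangle.mono₂ _ (inv_rot_of_distTriang _ hT) ?_
    exact hmono _ (fun Y hY => (hK Y hY).shift (-1)) _
      (comp_distTriang_mor_zero₁₂ _ (inv_rot_of_distTriang _ hT))
  have hδ : δ = 0 := Triangle.mor₃_eq_zero_of_mono₁ _ hT hmono'
  obtain ⟨s, hs⟩ := mk_coyoneda_exact₃ hT (𝟙 K) (by rw [hδ, comp_zero])
  have hKz : IsZero K := by
    rw [IsZero.iff_id_eq_zero, hs, hK G' hG' s, zero_comp]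
  exact (Triangle.isZero₃_iff_isIso₁ _ hT).1 hKz

lemma heartExact_of_iso {F F' : Heart t ⥤ Heart t} (e : F ≅ F') (hF : HeartExact t F) :
    HeartExact t F' := by
  rintro X Y Z f g hses
  obtain ⟨-, -, -, h, hT⟩ := hF X Y Z f g hses
  let e' (V : Heart t) : (F'.obj V).obj ≅ (F.obj V).obj :=
    (ObjectProperty.ι _).mapIso (e.app V).symm
  exact ⟨(F'.obj X).property, (F'.obj Y).property, (F'.obj Z).property, _,
    distinguished_mk_of_iso hT (e' X) (e' Y) (e' Z) (congrArg (·.hom) (e.inv.naturality f))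
      (congrArg (·.hom) (e.inv.naturality g))
      (show ((e' Z).hom ≫ h ≫ (e' X).inv⟦(1 : ℤ)⟧') ≫ (e' X).hom⟦(1 : ℤ)⟧' = _ by
        simp [← Functor.map_comp])⟩

end TStructure

section Truncations

variable [HasBinaryBiproducts C]

/-- `Wle i` is `W_{≤i}` with counit `ε i`, the right adjoint to the inclusion of
`Heart(t) ∩ C^{w≤i}`, and `Wge i X = X / W_{≤i-1}X` with quotient map `η i`. -/
structure WeightTruncations (w : BoundedWeightStructure C) (t : BoundedTStructure C) where
  Wle : ℤ → Heart t ⥤ Heart t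
  ε : ∀ i : ℤ, Wle i ⟶ 𝟭 (Heart t)
  Wle_mem : ∀ (i : ℤ) (X : Heart t), ((Wle i).obj X).obj ∈ w.wle i
  existsUnique_lift : ∀ (i : ℤ) (Y X : Heart t), Y.obj ∈ w.wle i → ∀ f : Y ⟶ X,
    ∃! g : Y ⟶ (Wle i).obj X, g ≫ (ε i).app X = f
  Wge : ℤ → Heart t ⥤ Heart t
  η : ∀ i : ℤ, 𝟭 (Heart t) ⟶ Wge i
  heartSES : ∀ (i : ℤ) (X : Heart t),
    HeartSES t (homC ((ε (i - 1)).app X)) (homC ((η i).app X))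

namespace WeightTruncations

variable {w : BoundedWeightStructure C} {t : BoundedTStructure C} (W : WeightTruncations w t)

lemma exists_distinguished (k : ℤ) (X : Heart t) :
    ∃ h, Triangle.mk ((W.ε (k - 1)).app X).hom ((W.η k).app X).hom h ∈ distTriang C :=
  (W.heartSES k X).2.2.2

lemma exists_distinguished_succ (k : ℤ) (X : Heart t) :
    ∃ h, Triangle.mk ((W.ε k).app X).hom ((W.η (k + 1)).app X).hom h ∈ distTriang C := by
  have h := W.exists_distinguished (k + 1) X
  rwa [add_sub_cancel_right] at h

lemma ε_comp_η (k : ℤ) (X : Heart t) : ((W.ε (k - 1)).app X).hom ≫ ((W.η k).app X).hom = 0 := by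
  obtain ⟨h, hT⟩ := W.exists_distinguished k X
  exact comp_distTriang_mor_zero₁₂ _ hT

lemma ε_naturality_hom (k : ℤ) {X Y : Heart t} (f : X ⟶ Y) :
    ((W.Wle k).map f).hom ≫ ((W.ε k).app Y).hom = ((W.ε k).app X).hom ≫ f.hom :=
  congrArg (·.hom) ((W.ε k).naturality f)

lemma η_naturality_hom (k : ℤ) {X Y : Heart t} (f : X ⟶ Y) :
    ((W.η k).app X).hom ≫ ((W.Wge k).map f).hom = f.hom ≫ ((W.η k).app Y).hom :=
  (congrArg (·.hom) ((W.η k).naturality f)).symm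

lemma eq_of_comp_ε_eq {k : ℤ} {X : Heart t} {Z : C} (hZ : Z ∈ t.le)
    {u u' : Z ⟶ ((W.Wle k).obj X).obj}
    (h : u ≫ ((W.ε k).app X).hom = u' ≫ ((W.ε k).app X).hom) : u = u' := by
  obtain ⟨h', hT⟩ := W.exists_distinguished_succ k X
  exact eq_of_comp_mor₁_eq hT (fun φ => t.orth _ hZ _ ((W.Wge (k + 1)).obj X).property.2 φ) h

lemma eq_of_η_comp_eq {k : ℤ} {X : Heart t} {Z : C} (hZ : Z ∈ t.ge)
    {u u' : ((W.Wge k).obj X).obj ⟶ Z}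
    (h : ((W.η k).app X).hom ≫ u = ((W.η k).app X).hom ≫ u') : u = u' := by
  obtain ⟨h', hT⟩ := W.exists_distinguished k X
  exact eq_of_mor₂_comp_eq hT (t.homZero_shift_one ((W.Wle (k - 1)).obj X).property.1 hZ) h

instance (k : ℤ) (X : Heart t) : Mono ((W.ε k).app X) :=
  ⟨fun {Z} _ _ h => ObjectProperty.hom_ext _ (W.eq_of_comp_ε_eq Z.property.1 (congrArg (·.hom) h))⟩

instance (k : ℤ) (X : Heart t) : Epi ((W.η k).app X) :=
  ⟨fun {Z} _ _ h => ObjectProperty.hom_ext _ (W.eq_of_η_comp_eq Z.property.2 (congrArg (·.hom) h))⟩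

noncomputable def lift {k : ℤ} {Y X : Heart t} (hY : Y.obj ∈ w.wle k) (f : Y ⟶ X) :
    Y ⟶ (W.Wle k).obj X :=
  (W.existsUnique_lift k Y X hY f).exists.choose

@[simp]
lemma lift_ε {k : ℤ} {Y X : Heart t} (hY : Y.obj ∈ w.wle k) (f : Y ⟶ X) :
    W.lift hY f ≫ (W.ε k).app X = f :=
  (W.existsUnique_lift k Y X hY f).exists.choose_spec

@[simp]
lemma lift_ε_assoc {k : ℤ} {Y X Z : Heart t} (hY : Y.obj ∈ w.wle k) (f : Y ⟶ X) (g : X ⟶ Z) :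
    W.lift hY f ≫ (W.ε k).app X ≫ g = f ≫ g := by
  rw [← Category.assoc, lift_ε]

lemma exists_lift {k : ℤ} {X : Heart t} {Y : C} (hY : Y ∈ t.heart) (hYw : Y ∈ w.wle k)
    (f : Y ⟶ X.obj) : ∃ g : Y ⟶ ((W.Wle k).obj X).obj, g ≫ ((W.ε k).app X).hom = f :=
  ⟨(W.lift (Y := ⟨Y, hY⟩) hYw (ObjectProperty.homMk f)).hom,
    congrArg (·.hom) (W.lift_ε (Y := ⟨Y, hY⟩) hYw (ObjectProperty.homMk f))⟩

lemma exists_desc {k : ℤ} {X : Heart t} {Z : C} (hZ : Z ∈ w.wge k) (f : X.obj ⟶ Z) :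
    ∃ g : ((W.Wge k).obj X).obj ⟶ Z, ((W.η k).app X).hom ≫ g = f := by
  obtain ⟨h, hT⟩ := W.exists_distinguished k X
  obtain ⟨g, hg⟩ := mk_yoneda_exact₂ hT f (w.homZero (sub_one_lt k) (W.Wle_mem _ X) hZ _)
  exact ⟨g, hg.symm⟩

lemma isIso_ε {k : ℤ} {X : Heart t} (hX : X.obj ∈ w.wle k) : IsIso ((W.ε k).app X) :=
  ⟨W.lift hX (𝟙 X), by rw [← cancel_mono ((W.ε k).app X)]; simp, by simp⟩

lemma isIso_η {k : ℤ} {X : Heart t} (hX : X.obj ∈ w.wge k) : IsIso ((W.η k).app X) := by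
  obtain ⟨h, hT⟩ := W.exists_distinguished k X
  have hε : (W.ε (k - 1)).app X = 0 :=
    ObjectProperty.hom_ext _ (w.homZero (sub_one_lt k) (W.Wle_mem _ X) hX _)
  have hL : IsZero ((W.Wle (k - 1)).obj X).obj := by
    have h0 : 𝟙 ((W.Wle (k - 1)).obj X) = 0 :=
      (cancel_mono ((W.ε (k - 1)).app X)).1 (by simp [hε])
    rw [IsZero.iff_id_eq_zero]
    exact congrArg (·.hom) h0
  rw [← ObjectProperty.isIso_hom_iff]
  exact (Triangle.isZero₁_iff_isIso₂ _ hT).1 hL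

lemma Wge_mem (h4 : ConditionIV w t) (k : ℤ) (X : Heart t) :
    ((W.Wge k).obj X).obj ∈ w.wge k := by
  obtain ⟨A, B, a, b, h, hT, hA, hB, hAh, -, -⟩ := h4 X.obj X.property (k - 1)
  rw [sub_add_cancel] at hB
  obtain ⟨r, hr⟩ := W.exists_desc hB b
  obtain ⟨g, rfl⟩ := W.exists_lift hAh hA a
  obtain ⟨s, hs⟩ := mk_yoneda_exact₂ hT ((W.η k).app X).hom
    (by rw [Category.assoc, W.ε_comp_η, comp_zero])
  refine w.mem_wge_of_retract r s (W.eq_of_η_comp_eq ((W.Wge k).obj X).property.2 ?_) hB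
  rw [reassoc_of% hr, ← hs, Category.comp_id]

lemma Wle_mem_wge (h4 : ConditionIV w t) {k : ℤ} {X : Heart t} (hX : X.obj ∈ w.wge k) :
    ((W.Wle k).obj X).obj ∈ w.wge k := by
  obtain ⟨A, B, a, b, h, hT, hA, hB, hAh, -, -⟩ := h4 X.obj X.property k
  have hA' : A ∈ w.wge k := w.mem_wge_of_distinguished (inv_rot_of_distTriang _ hT)
    (shift_mem_shiftClass hB (-1) k (by ring)) hX
  obtain ⟨g, hg⟩ := W.exists_lift hAh hA a
  obtain ⟨u, hu⟩ := mk_coyoneda_exact₂ hT ((W.ε k).app X).hom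
    (w.homZero (lt_add_one k) (W.Wle_mem k X) hB _)
  refine w.mem_wge_of_retract u g (W.eq_of_comp_ε_eq ((W.Wle k).obj X).property.1 ?_) hA'
  rw [Category.assoc, hg, ← hu, Category.id_comp]

lemma Wge_Wle_mem_wle (k : ℤ) (X : Heart t) :
    ((W.Wge k).obj ((W.Wle k).obj X)).obj ∈ w.wle k := by
  obtain ⟨h, hT⟩ := W.exists_distinguished k ((W.Wle k).obj X)
  exact w.mem_wle_of_distinguished (rot_of_distTriang _ hT) (W.Wle_mem k X)
    (shift_mem_shiftClass (W.Wle_mem _ _) 1 k (by ring))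

noncomputable def μ (k : ℤ) : W.Wle (k - 1) ⟶ W.Wle k where
  app X := W.lift (w.wle_mono (sub_le_self k zero_le_one) (W.Wle_mem (k - 1) X))
    ((W.ε (k - 1)).app X)
  naturality X Y f := by
    rw [← cancel_mono ((W.ε k).app Y)]
    simp

@[simp]
lemma μ_ε (k : ℤ) (X : Heart t) : (W.μ k).app X ≫ (W.ε k).app X = (W.ε (k - 1)).app X := by
  simp [μ]

@[simp]
lemma μ_ε_assoc (k : ℤ) {X Z : Heart t} (g : X ⟶ Z) :
    (W.μ k).app X ≫ (W.ε k).app X ≫ g = (W.ε (k - 1)).app X ≫ g := by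
  rw [← Category.assoc, μ_ε]

lemma Wle_map_ε_μ (k : ℤ) (X : Heart t) :
    (W.Wle (k - 1)).map ((W.ε k).app X) ≫ (W.μ k).app X =
      (W.ε (k - 1)).app ((W.Wle k).obj X) := by
  rw [← cancel_mono ((W.ε k).app X)]
  simp

lemma isIso_Wle_map_ε (k : ℤ) (X : Heart t) : IsIso ((W.Wle (k - 1)).map ((W.ε k).app X)) := by
  refine ⟨W.lift (W.Wle_mem (k - 1) X) ((W.μ k).app X), ?_, ?_⟩
  · rw [← cancel_mono ((W.ε (k - 1)).app ((W.Wle k).obj X)), Category.assoc, lift_ε,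
      Wle_map_ε_μ, Category.id_comp]
  · rw [← cancel_mono ((W.ε (k - 1)).app X)]
    simp

lemma heartSES_μ (k : ℤ) (X : Heart t) :
    HeartSES t ((W.μ k).app X).hom ((W.η k).app ((W.Wle k).obj X)).hom := by
  obtain ⟨h, hT⟩ := W.exists_distinguished k ((W.Wle k).obj X)
  have := W.isIso_Wle_map_ε k X
  have he : inv ((W.Wle (k - 1)).map ((W.ε k).app X)) ≫ (W.ε (k - 1)).app ((W.Wle k).obj X) =
      (W.μ k).app X := by
    rw [IsIso.inv_comp_eq, W.Wle_map_ε_μ]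
  let e := (ObjectProperty.ι _).mapIso (asIso ((W.Wle (k - 1)).map ((W.ε k).app X))).symm
  have he' : e.hom ≫ ((W.ε (k - 1)).app ((W.Wle k).obj X)).hom = ((W.μ k).app X).hom :=
    congrArg (fun φ => φ.hom) he
  have hT' := distinguished_mk_of_iso₁ hT e
  rw [he'] at hT'
  exact ⟨((W.Wle (k - 1)).obj X).property, ((W.Wle k).obj X).property,
    ((W.Wge k).obj ((W.Wle k).obj X)).property, _, hT'⟩

lemma exists_distinguished_Wle_Wge (h4 : ConditionIV w t) (i : ℤ) (X : Heart t) :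
    ∃ (θ : ((W.Wge i).obj X).obj ⟶ ((W.Wge (i + 1)).obj X).obj)
      (h : ((W.Wge (i + 1)).obj X).obj ⟶ ((W.Wle i).obj ((W.Wge i).obj X)).obj⟦(1 : ℤ)⟧),
      ((W.η i).app X).hom ≫ θ = ((W.η (i + 1)).app X).hom ∧
      Triangle.mk ((W.ε i).app ((W.Wge i).obj X)).hom θ h ∈ distTriang C := by
  set Y := (W.Wge i).obj X
  have hR : ((W.Wge (i + 1)).obj X).obj ∈ w.wge (i + 1) := W.Wge_mem h4 (i + 1) X
  obtain ⟨θ, hθ⟩ := W.exists_desc (X := X) (w.wge_anti (le_add_of_nonneg_right zero_le_one) hR)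
    ((W.η (i + 1)).app X).hom
  obtain ⟨τ, hτ⟩ := W.exists_desc (X := Y) hR θ
  have hρ := W.η_naturality_hom (X := X) (i + 1) ((W.η i).app X)
  have hρτ : ((W.Wge (i + 1)).map ((W.η i).app X)).hom ≫ τ = 𝟙 _ :=
    W.eq_of_η_comp_eq (X := X) ((W.Wge (i + 1)).obj X).property.2
      (by rw [reassoc_of% hρ, hτ, hθ]; exact (Category.comp_id _).symm)
  have hθρ : θ ≫ ((W.Wge (i + 1)).map ((W.η i).app X)).hom = ((W.η (i + 1)).app Y).hom :=
    W.eq_of_η_comp_eq (X := X) ((W.Wge (i + 1)).obj Y).property.2 (by rw [reassoc_of% hθ, hρ])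
  have hτρ : τ ≫ ((W.Wge (i + 1)).map ((W.η i).app X)).hom = 𝟙 _ :=
    W.eq_of_η_comp_eq (X := Y) ((W.Wge (i + 1)).obj Y).property.2
      (by rw [reassoc_of% hτ, hθρ, Category.comp_id])
  obtain ⟨h, hT⟩ := W.exists_distinguished_succ i Y
  have hT' := distinguished_mk_of_iso₃ hT ⟨τ, _, hτρ, hρτ⟩
  rw [hτ] at hT'
  exact ⟨θ, _, hθ, hT'⟩

lemma eq_zero_of_Wle_map_η_comp (h4 : ConditionIV w t) (i : ℤ) (X : Heart t) {Z : C} (hZ : Z ∈ t.ge)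
    (u : ((W.Wle i).obj ((W.Wge i).obj X)).obj ⟶ Z)
    (hu : ((W.Wle i).map ((W.η i).app X)).hom ≫ u = 0) : u = 0 := by
  obtain ⟨θ, h₅, hθ, hT₅⟩ := W.exists_distinguished_Wle_Wge h4 i X
  obtain ⟨h₃, hT₃⟩ := W.exists_distinguished_succ i X
  have hc := W.ε_naturality_hom (X := X) i ((W.η i).app X)
  have h₃₅ : h₃ ≫ ((W.Wle i).map ((W.η i).app X)).hom⟦(1 : ℤ)⟧' = h₅ :=
    (comm₃_of_comm₁₂ hT₃ hT₅
      (t.homZero_shift_one ((W.Wle i).obj X).property.1 ((W.Wge (i + 1)).obj X).property.2)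
      hc.symm ((Category.comp_id _).trans hθ.symm)).trans (Category.id_comp h₅)
  rw [← h₃₅] at hT₅
  obtain ⟨v, rfl⟩ := exists_eq_mor₁_comp_of_comp_eq_zero h₃ _ hT₅ u hu
  obtain ⟨e, he⟩ := mk_yoneda_exact₂ hT₃ (((W.η i).app X).hom ≫ v)
    (by rw [← Category.assoc, ← hc, Category.assoc, hu])
  have hv : v = θ ≫ e := W.eq_of_η_comp_eq hZ (by rw [he, reassoc_of% hθ])
  have hεθ : ((W.ε i).app ((W.Wge i).obj X)).hom ≫ θ = 0 := comp_distTriang_mor_zero₁₂ _ hT₅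
  rw [hv, reassoc_of% hεθ, zero_comp]

lemma exists_desc_Wle_map_η (h4 : ConditionIV w t) (i : ℤ) (X : Heart t) :
    ∃ g : ((W.Wge i).obj ((W.Wle i).obj X)).obj ⟶ ((W.Wle i).obj ((W.Wge i).obj X)).obj,
      ((W.η i).app ((W.Wle i).obj X)).hom ≫ g = ((W.Wle i).map ((W.η i).app X)).hom :=
  W.exists_desc (W.Wle_mem_wge h4 (W.Wge_mem h4 i X)) _

noncomputable def grComparison (h4 : ConditionIV w t) (i : ℤ) :
    W.Wle i ⋙ W.Wge i ⟶ W.Wge i ⋙ W.Wle i where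
  app X := ObjectProperty.homMk (W.exists_desc_Wle_map_η h4 i X).choose
  naturality X X' g := by
    rw [← cancel_epi ((W.η i).app ((W.Wle i).obj X))]
    ext
    have hX := (W.exists_desc_Wle_map_η h4 i X).choose_spec
    have hX' := (W.exists_desc_Wle_map_η h4 i X').choose_spec
    have hg := congrArg (·.hom) ((W.η i).naturality ((W.Wle i).map g))
    have hg' := congrArg (fun φ => ((W.Wle i).map φ).hom) ((W.η i).naturality g)
    dsimp at hg hg' ⊢
    rw [reassoc_of% hX, ← reassoc_of% hg, hX']
    simpa using hg'

lemma η_grComparison (h4 : ConditionIV w t) (i : ℤ) (X : Heart t) :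
    ((W.η i).app ((W.Wle i).obj X)).hom ≫ ((W.grComparison h4 i).app X).hom =
      ((W.Wle i).map ((W.η i).app X)).hom :=
  (W.exists_desc_Wle_map_η h4 i X).choose_spec

lemma eq_zero_of_comp_grComparison (h4 : ConditionIV w t) (i : ℤ) (X : Heart t) {Z : C}
    (hZ : ∀ Y ∈ t.ge, HomZero Z (Y⟦(-1 : ℤ)⟧)) (z : Z ⟶ ((W.Wge i).obj ((W.Wle i).obj X)).obj)
    (hz : z ≫ ((W.grComparison h4 i).app X).hom = 0) : z = 0 := by
  obtain ⟨-, -, -, hΔ, dΔ⟩ := W.heartSES_μ i X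
  obtain ⟨h₂, d₂⟩ := W.exists_distinguished i X
  obtain ⟨h₃, d₃⟩ := W.exists_distinguished_succ i X
  have hμ : ((W.μ i).app X).hom ≫ ((W.ε i).app X).hom = ((W.ε (i - 1)).app X).hom :=
    congrArg (·.hom) (W.μ_ε i X)
  have hα : ((W.η i).app ((W.Wle i).obj X)).hom ≫ ((W.grComparison h4 i).app X).hom ≫
      ((W.ε i).app ((W.Wge i).obj X)).hom = ((W.ε i).app X).hom ≫ ((W.η i).app X).hom := by
    rw [reassoc_of% (W.η_grComparison h4 i X), W.ε_naturality_hom]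
  have hΔα : hΔ =
      (((W.grComparison h4 i).app X).hom ≫ ((W.ε i).app ((W.Wge i).obj X)).hom) ≫ h₂ := by
    simpa using comm₃_of_comm₁₂ dΔ d₂
      (t.homZero_shift_one ((W.Wle (i - 1)).obj X).property.1 ((W.Wge i).obj X).property.2)
      (hμ.trans (Category.id_comp _).symm) hα
  obtain ⟨z₁, rfl⟩ := mk_coyoneda_exact₃ dΔ z (by simp [hΔα, reassoc_of% hz])
  obtain ⟨e, he⟩ := mk_coyoneda_exact₂ d₂ (z₁ ≫ ((W.ε i).app X).hom)
    (by rw [Category.assoc, ← hα, ← Category.assoc, ← Category.assoc, hz, zero_comp])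
  have hz₁ : z₁ = e ≫ ((W.μ i).app X).hom :=
    eq_of_comp_mor₁_eq d₃ (hZ _ ((W.Wge (i + 1)).obj X).property.2) (by rw [he, Category.assoc, hμ])
  have hμη : ((W.μ i).app X).hom ≫ ((W.η i).app ((W.Wle i).obj X)).hom = 0 :=
    comp_distTriang_mor_zero₁₂ _ dΔ
  rw [hz₁, Category.assoc, hμη, comp_zero]

lemma isIso_grComparison (h4 : ConditionIV w t) (i : ℤ) : IsIso (W.grComparison h4 i) := by
  have (X : Heart t) : IsIso ((W.grComparison h4 i).app X) := by
    rw [← ObjectProperty.isIso_hom_iff]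
    refine t.isIso_of_mono_of_epi ((W.Wge i).obj ((W.Wle i).obj X)).property.1
      ((W.Wle i).obj ((W.Wge i).obj X)).property.2 _
      (fun Z hZ z hz => W.eq_zero_of_comp_grComparison h4 i X hZ z hz)
      (fun Y hY u hu => W.eq_zero_of_Wle_map_η_comp h4 i X hY u ?_)
    rw [← W.η_grComparison h4 i X, Category.assoc, hu, comp_zero]
  exact NatIso.isIso_of_isIso_app _

noncomputable def grIso (h4 : ConditionIV w t) (i : ℤ) : W.Wle i ⋙ W.Wge i ≅ W.Wge i ⋙ W.Wle i :=
  have := W.isIso_grComparison h4 i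
  asIso (W.grComparison h4 i)

section ExactWle

variable (k : ℤ) {A B D : Heart t} (u : A ⟶ B) (v : B ⟶ D)
  {hS : D.obj ⟶ A.obj⟦(1 : ℤ)⟧}

lemma exists_connecting_Wle (h4 : ConditionIV w t)
    (dS : Triangle.mk u.hom v.hom hS ∈ distTriang C) :
    ∃ δ : ((W.Wle k).obj D).obj ⟶ ((W.Wle k).obj A).obj⟦(1 : ℤ)⟧,
      δ ≫ ((W.ε k).app A).hom⟦(1 : ℤ)⟧' = ((W.ε k).app D).hom ≫ hS ∧
      δ ≫ ((W.Wle k).map u).hom⟦(1 : ℤ)⟧' = 0 ∧ ((W.Wle k).map v).hom ≫ δ = 0 := by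
  obtain ⟨hA, dA⟩ := W.exists_distinguished_succ k A
  obtain ⟨hB, dB⟩ := W.exists_distinguished_succ k B
  have hR : (((W.Wge (k + 1)).obj A).obj⟦(1 : ℤ)⟧) ∈ w.wge (k + 1 + 1) :=
    shift_mem_shiftClass (W.Wge_mem h4 (k + 1) A) 1 _ rfl
  obtain ⟨δ, hδ⟩ := mk_coyoneda_exact₁ (distinguished_mk_rotate dA) (((W.ε k).app D).hom ≫ hS)
    (w.homZero (by omega) (W.Wle_mem k D) hR _)
  have hδ' : (-δ) ≫ ((W.ε k).app A).hom⟦(1 : ℤ)⟧' = ((W.ε k).app D).hom ≫ hS := by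
    rw [hδ]; simp
  refine ⟨-δ, hδ', eq_zero_of_comp_shift_mor₁ dB
    (w.homZero (lt_add_one k) (W.Wle_mem k D) (W.Wge_mem h4 (k + 1) B)) ?_,
    eq_zero_of_comp_shift_mor₁ dA
    (w.homZero (lt_add_one k) (W.Wle_mem k B) (W.Wge_mem h4 (k + 1) A)) ?_⟩
  · have hSu : hS ≫ u.hom⟦(1 : ℤ)⟧' = 0 := comp_distTriang_mor_zero₃₁ _ dS
    rw [Category.assoc, ← Functor.map_comp, W.ε_naturality_hom, Functor.map_comp,
      reassoc_of% hδ', hSu, comp_zero]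
  · have hvS : v.hom ≫ hS = 0 := comp_distTriang_mor_zero₂₃ _ dS
    rw [Category.assoc, hδ', reassoc_of% (W.ε_naturality_hom k v), hvS, comp_zero]

lemma exists_section_Wle (dS : Triangle.mk u.hom v.hom hS ∈ distTriang C) {K : C}
    {k₁ : ((W.Wle k).obj B).obj ⟶ K} {d₁ : K ⟶ ((W.Wle k).obj A).obj⟦(1 : ℤ)⟧}
    (dK : Triangle.mk ((W.Wle k).map u).hom k₁ d₁ ∈ distTriang C) {ν : K ⟶ D.obj}
    (hν₁ : k₁ ≫ ν = ((W.ε k).app B).hom ≫ v.hom)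
    (hν₂ : d₁ ≫ ((W.ε k).app A).hom⟦(1 : ℤ)⟧' = ν ≫ hS)
    {δ : ((W.Wle k).obj D).obj ⟶ ((W.Wle k).obj A).obj⟦(1 : ℤ)⟧}
    (hδ : δ ≫ ((W.ε k).app A).hom⟦(1 : ℤ)⟧' = ((W.ε k).app D).hom ≫ hS)
    (hδu : δ ≫ ((W.Wle k).map u).hom⟦(1 : ℤ)⟧' = 0) :
    ∃ s : ((W.Wle k).obj D).obj ⟶ K, s ≫ d₁ = δ ∧ s ≫ ν = ((W.ε k).app D).hom := by
  obtain ⟨s₀, rfl⟩ := mk_coyoneda_exact₁ dK δ hδu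
  obtain ⟨y, hy⟩ := mk_coyoneda_exact₃ dS
    ((show ((W.Wle k).obj D).obj ⟶ D.obj from ((W.ε k).app D).hom) - s₀ ≫ ν)
    (by rw [Preadditive.sub_comp, Category.assoc, ← hν₂, ← hδ, Category.assoc, sub_self])
  obtain ⟨z, rfl⟩ := W.exists_lift ((W.Wle k).obj D).property (W.Wle_mem k D) y
  have hk₁d₁ : k₁ ≫ d₁ = 0 := comp_distTriang_mor_zero₂₃ _ dK
  refine ⟨s₀ + z ≫ k₁, by simp [hk₁d₁], ?_⟩
  rw [Preadditive.add_comp, Category.assoc, hν₁, ← Category.assoc, ← hy]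
  abel

lemma Wle_map_comp_section (dS : Triangle.mk u.hom v.hom hS ∈ distTriang C) {K : C}
    {k₁ : ((W.Wle k).obj B).obj ⟶ K} {d₁ : K ⟶ ((W.Wle k).obj A).obj⟦(1 : ℤ)⟧}
    (dK : Triangle.mk ((W.Wle k).map u).hom k₁ d₁ ∈ distTriang C) {ν : K ⟶ D.obj}
    (hν₁ : k₁ ≫ ν = ((W.ε k).app B).hom ≫ v.hom)
    {δ : ((W.Wle k).obj D).obj ⟶ ((W.Wle k).obj A).obj⟦(1 : ℤ)⟧}
    (hvδ : ((W.Wle k).map v).hom ≫ δ = 0) {s : ((W.Wle k).obj D).obj ⟶ K}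
    (hs₁ : s ≫ d₁ = δ) (hs₂ : s ≫ ν = ((W.ε k).app D).hom) :
    ((W.Wle k).map v).hom ≫ s = k₁ := by
  have hk₁d₁ : k₁ ≫ d₁ = 0 := comp_distTriang_mor_zero₂₃ _ dK
  obtain ⟨ψ, hψ⟩ := mk_coyoneda_exact₃ dK (k₁ - ((W.Wle k).map v).hom ≫ s)
    (by rw [Preadditive.sub_comp, hk₁d₁, Category.assoc, hs₁, hvδ, sub_self])
  have hψν : (ψ ≫ ((W.ε k).app B).hom) ≫ v.hom = 0 := by
    rw [Category.assoc, ← hν₁, ← Category.assoc, ← hψ, Preadditive.sub_comp, Category.assoc, hs₂,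
      W.ε_naturality_hom, hν₁, sub_self]
  obtain ⟨ξ, hξ⟩ := mk_coyoneda_exact₂ dS _ hψν
  obtain ⟨ξ', rfl⟩ := W.exists_lift ((W.Wle k).obj B).property (W.Wle_mem k B) ξ
  have hψ' : ψ = ξ' ≫ ((W.Wle k).map u).hom := W.eq_of_comp_ε_eq ((W.Wle k).obj B).property.1
    (by rw [hξ, Category.assoc, Category.assoc, W.ε_naturality_hom])
  have hu₁k₁ : ((W.Wle k).map u).hom ≫ k₁ = 0 := comp_distTriang_mor_zero₁₂ _ dK
  rw [hψ', Category.assoc, hu₁k₁, comp_zero, sub_eq_zero] at hψ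
  exact hψ.symm

end ExactWle

lemma heartExact_Wle (h4 : ConditionIV w t) (k : ℤ) : HeartExact t (W.Wle k) := by
  rintro A B D u v ⟨-, -, -, hS, dS⟩
  have huv : u.hom ≫ v.hom = 0 := comp_distTriang_mor_zero₁₂ _ dS
  have hLuv : ((W.Wle k).map u).hom ≫ ((W.Wle k).map v).hom = 0 :=
    W.eq_of_comp_ε_eq ((W.Wle k).obj A).property.1 (by
      rw [Category.assoc, W.ε_naturality_hom, reassoc_of% (W.ε_naturality_hom k u), huv,
        comp_zero, zero_comp])
  obtain ⟨δ, hδ, hδu, hvδ⟩ := W.exists_connecting_Wle k u v h4 dS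
  obtain ⟨K, k₁, d₁, dK⟩ := distinguished_cocone_triangle ((W.Wle k).map u).hom
  obtain ⟨p, hp⟩ := mk_yoneda_exact₂ dK _ hLuv
  obtain ⟨ν, hν₁, hν₂⟩ := complete_distinguished_triangle_morphism _ _ dK dS _ _
    (W.ε_naturality_hom k u)
  obtain ⟨s, hs₁, hs₂⟩ := W.exists_section_Wle k u v dS dK hν₁ hν₂ hδ hδu
  have hpε : p ≫ ((W.ε k).app D).hom = ν :=
    eq_of_mor₂_comp_eq dK (t.homZero_shift_one ((W.Wle k).obj A).property.1 D.property.2)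
      (by rw [← reassoc_of% hp, W.ε_naturality_hom]; exact hν₁.symm)
  have hsp : s ≫ p = 𝟙 _ := W.eq_of_comp_ε_eq ((W.Wle k).obj D).property.1
    (by rw [Category.assoc, hpε, hs₂, Category.id_comp])
  have : Mono u := t.mono_of_distinguished u dS D.property.2
  have : Mono ((W.Wle k).map u) := mono_of_mono_fac ((W.ε k).naturality u)
  exact ⟨((W.Wle k).obj A).property, ((W.Wle k).obj B).property, ((W.Wle k).obj D).property,
    _, distinguished_mk_of_section dK (t.homZero_shift_cone _ dK) hp.symm
      (W.Wle_map_comp_section k u v dS dK hν₁ hvδ hs₁ hs₂) hsp⟩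

section ExactWge

variable (i : ℤ) {A B D : Heart t} (u : A ⟶ B) (v : B ⟶ D)
  {hS : D.obj ⟶ A.obj⟦(1 : ℤ)⟧}

lemma exists_retraction_Wge_map (h4 : ConditionIV w t) (hD : D.obj ∈ w.wle i)
    (dS : Triangle.mk u.hom v.hom hS ∈ distTriang C) :
    ∃ r : ((W.Wge i).obj B).obj ⟶ ((W.Wge i).obj A).obj, ((W.Wge i).map u).hom ≫ r = 𝟙 _ := by
  obtain ⟨y, hy⟩ : ∃ y, ((W.η i).app A).hom = u.hom ≫ y :=
    Triangle.yoneda_exact₂ _ (inv_rot_of_distTriang _ dS) _ (w.homZero (sub_one_lt i)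
      (shift_mem_shiftClass hD (-1) (i - 1) (by ring)) (W.Wge_mem h4 i A) _)
  obtain ⟨r, hr⟩ := W.exists_desc (W.Wge_mem h4 i A) y
  refine ⟨r, W.eq_of_η_comp_eq (X := A) ((W.Wge i).obj A).property.2 ?_⟩
  rw [reassoc_of% (W.η_naturality_hom i u), hr, ← hy, Category.comp_id]

lemma exists_section_Wge (h4 : ConditionIV w t) (dS : Triangle.mk u.hom v.hom hS ∈ distTriang C)
    {K : C} {k₁ : ((W.Wge i).obj B).obj ⟶ K} {d₁ : K ⟶ ((W.Wge i).obj A).obj⟦(1 : ℤ)⟧}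
    (dK : Triangle.mk ((W.Wge i).map u).hom k₁ d₁ ∈ distTriang C) :
    ∃ s : ((W.Wge i).obj D).obj ⟶ K,
      v.hom ≫ ((W.η i).app D).hom ≫ s = ((W.η i).app B).hom ≫ k₁ := by
  have hK : K ∈ w.wge i := w.mem_wge_of_distinguished (distinguished_mk_rotate dK)
    (W.Wge_mem h4 i B) (w.wge_anti (le_add_of_nonneg_right zero_le_one)
      (shift_mem_shiftClass (W.Wge_mem h4 i A) 1 (i + 1) rfl))
  have hu₁k₁ : ((W.Wge i).map u).hom ≫ k₁ = 0 := comp_distTriang_mor_zero₁₂ _ dK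
  obtain ⟨s₀, hs₀⟩ := mk_yoneda_exact₂ dS (((W.η i).app B).hom ≫ k₁)
    (by rw [← reassoc_of% (W.η_naturality_hom i u), hu₁k₁, comp_zero])
  obtain ⟨s, hs⟩ := W.exists_desc hK s₀
  exact ⟨s, by rw [hs, ← hs₀]⟩

end ExactWge

lemma heartSES_Wge_map (h4 : ConditionIV w t) (i : ℤ) {A B D : Heart t} (u : A ⟶ B) (v : B ⟶ D)
    (hD : D.obj ∈ w.wle i) (hses : HeartSES t u.hom v.hom) :
    HeartSES t ((W.Wge i).map u).hom ((W.Wge i).map v).hom := by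
  obtain ⟨-, -, -, hS, dS⟩ := hses
  have huv : u.hom ≫ v.hom = 0 := comp_distTriang_mor_zero₁₂ _ dS
  have hGuv : ((W.Wge i).map u).hom ≫ ((W.Wge i).map v).hom = 0 :=
    W.eq_of_η_comp_eq (X := A) ((W.Wge i).obj D).property.2 (by
      rw [reassoc_of% (W.η_naturality_hom i u), W.η_naturality_hom, reassoc_of% huv, zero_comp,
        comp_zero])
  obtain ⟨K, k₁, d₁, dK⟩ := distinguished_cocone_triangle ((W.Wge i).map u).hom
  obtain ⟨p, hp⟩ := mk_yoneda_exact₂ dK _ hGuv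
  obtain ⟨s, hs⟩ := W.exists_section_Wge i u v h4 dS dK
  obtain ⟨hB, dB⟩ := W.exists_distinguished i B
  have hsp : s ≫ p = 𝟙 _ := W.eq_of_η_comp_eq (X := D) ((W.Wge i).obj D).property.2
    (eq_of_mor₂_comp_eq dS (t.homZero_shift_one A.property.1 ((W.Wge i).obj D).property.2)
      (by rw [reassoc_of% hs, ← hp, W.η_naturality_hom, Category.comp_id]))
  have hvs : ((W.Wge i).map v).hom ≫ s = k₁ := by
    refine eq_of_mor₂_comp_eq dB (homZero_obj₃ dK
      (t.homZero_shift_one ((W.Wle (i - 1)).obj B).property.1 ((W.Wge i).obj B).property.2)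
      (w.homZero (lt_add_one i) (shift_mem_shiftClass (W.Wle_mem (i - 1) B) 1 i (by ring))
        (shift_mem_shiftClass (W.Wge_mem h4 i A) 1 (i + 1) rfl))) ?_
    rw [← Category.assoc, W.η_naturality_hom, Category.assoc, hs]
  obtain ⟨r, hr⟩ := W.exists_retraction_Wge_map i u v h4 hD dS
  have : Mono ((W.Wge i).map u) :=
    mono_of_mono_fac (show (W.Wge i).map u ≫ ObjectProperty.homMk r = 𝟙 _ from
      ObjectProperty.hom_ext _ hr)
  exact ⟨((W.Wge i).obj A).property, ((W.Wge i).obj B).property, ((W.Wge i).obj D).property, _,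
    distinguished_mk_of_section dK (t.homZero_shift_cone _ dK) hp.symm hvs hsp⟩

lemma heartExact_Wle_comp_Wge (h4 : ConditionIV w t) (i : ℤ) :
    HeartExact t (W.Wle i ⋙ W.Wge i) := fun _ _ D u v hses =>
  W.heartSES_Wge_map h4 i _ _ (W.Wle_mem i D) (W.heartExact_Wle h4 i _ _ _ u v hses)

end WeightTruncations

end Truncations

end WT

namespace WT

variable (C : Type u) [Category.{v} C] [Preadditive C] [HasZeroObject C]
  [HasShift C ℤ] [∀ n : ℤ, (shiftFunctor C n).Additive] [Pretriangulated C]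
variable [HasBinaryBiproducts C]

/-- Proposition 1.1(III1): under condition (iv), with `W_{≤i}` the right adjoints to
the inclusions `Heart(t) ∩ C^{w≤i} → Heart(t)` (encoded as endofunctors `Wle i` with
counits `ε i`) and `W_{≥i}X := X/W_{≤i-1}X` (encoded as endofunctors `Wge i` with
units `η i`), the functors `Gr_i = W_{≥i} ∘ W_{≤i}` and `Gr_i' = W_{≤i} ∘ W_{≥i}` are
isomorphic exact endofunctors of the heart, take values in `A_i = Heart(t) ∩ C^{w=i}`,
restrict to the identity on `A_i`, and `Gr_i X ≅ W_{≤i}X / W_{≤i-1}X` naturally. -/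
theorem graded_pieces_functors (w : BoundedWeightStructure C)
    (t : BoundedTStructure C) (h4 : ConditionIV w t)
    (Wle : ℤ → (Heart t ⥤ Heart t)) (ε : ∀ i : ℤ, Wle i ⟶ 𝟭 (Heart t))
    (hWleMem : ∀ (i : ℤ) (X : Heart t), ((Wle i).obj X).obj ∈ w.wle i)
    (hWleAdj : ∀ (i : ℤ) (Y X : Heart t), Y.obj ∈ w.wle i → ∀ f : Y ⟶ X,
      ∃! g : Y ⟶ (Wle i).obj X, g ≫ (ε i).app X = f)
    (Wge : ℤ → (Heart t ⥤ Heart t)) (η : ∀ i : ℤ, 𝟭 (Heart t) ⟶ Wge i)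
    (hWge : ∀ (i : ℤ) (X : Heart t),
      HeartSES t (homC ((ε (i - 1)).app X)) (homC ((η i).app X)))
    (i : ℤ) :
    Nonempty ((Wle i ⋙ Wge i) ≅ (Wge i ⋙ Wle i)) ∧
    HeartExact t (Wle i ⋙ Wge i) ∧ HeartExact t (Wge i ⋙ Wle i) ∧
    (∀ X : Heart t, ((Wle i ⋙ Wge i).obj X).obj ∈ w.wle i ∧
      ((Wle i ⋙ Wge i).obj X).obj ∈ w.wge i ∧
      ((Wge i ⋙ Wle i).obj X).obj ∈ w.wle i ∧
      ((Wge i ⋙ Wle i).obj X).obj ∈ w.wge i) ∧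
    (∀ X : Heart t, X.obj ∈ w.wle i → X.obj ∈ w.wge i →
      IsIso ((ε i).app X) ∧ IsIso ((η i).app X)) ∧
    (∃ μ : Wle (i - 1) ⟶ Wle i,
      (∀ X : Heart t, μ.app X ≫ (ε i).app X = (ε (i - 1)).app X) ∧
      ∀ X : Heart t,
        HeartSES t (homC (μ.app X)) (homC ((η i).app ((Wle i).obj X)))) := by
  let W : WeightTruncations w t := ⟨Wle, ε, hWleMem, hWleAdj, Wge, η, hWge⟩
  refine ⟨⟨W.grIso h4 i⟩, W.heartExact_Wle_comp_Wge h4 i,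
    heartExact_of_iso (W.grIso h4 i) (W.heartExact_Wle_comp_Wge h4 i),
    fun X => ⟨W.Wge_Wle_mem_wle i X, W.Wge_mem h4 i _, W.Wle_mem i _,
      W.Wle_mem_wge h4 (W.Wge_mem h4 i X)⟩,
    fun X hle hge => ⟨W.isIso_ε hle, W.isIso_η hge⟩, W.μ i, W.μ_ε i, W.heartSES_μ i⟩

end WT
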